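/- arXiv:1704.00213 — 13 statements merged into one kernel-verified Lean document; each statement's English description precedes it below -/
import Mathlib

section
/- A ring R is Yaqub nil-clean if and only if for every a in R, the element a^2 is strongly weakly nil-clean, i.e., a^2 - a^4 or a^2 + a^4 is nilpotent. -/
def YaqubNilClean (R : Type*) [Ring R] : Prop :=
  ∀ a : R, IsNilpotent (a + a ^ 3) ∨ IsNilpotent (a - a ^ 3)

/-! Writing `a ± a ^ 3 = a * (1 ± a ^ 2)` and `a ^ 2 ± a ^ 4 = a ^ 2 * (1 ± a ^ 2)`, the two
conditions differ by a factor `a` that commutes with everything in sight. Multiplying by `a`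
passes from the first to the second, and `(a * b) ^ 2 = (a ^ 2 * b) * b` goes back. -/

theorem Commute.isNilpotent_sq_mul_iff {R : Type*} [Semiring R] {a b : R}
    (h : Commute a b) : IsNilpotent (a ^ 2 * b) ↔ IsNilpotent (a * b) := by
  constructor
  · intro hsq
    have hprod : (a * b) ^ 2 = a ^ 2 * b * b := by rw [h.mul_pow, sq b, mul_assoc]
    have : IsNilpotent ((a * b) ^ 2) :=
      hprod ▸ ((h.pow_left 2).mul_left (Commute.refl b)).isNilpotent_mul_right hsq
    exact (IsNilpotent.pow_iff_pos two_ne_zero).mp this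
  · intro hab
    rw [sq, mul_assoc]
    exact ((Commute.refl a).mul_right h).isNilpotent_mul_left hab

section

variable {R : Type*} [Ring R] (a : R)

theorem isNilpotent_sq_add_sq_sq_iff :
    IsNilpotent (a ^ 2 + (a ^ 2) ^ 2) ↔ IsNilpotent (a + a ^ 3) := by
  have h : Commute a (1 + a ^ 2) := (Commute.one_right a).add_right (Commute.self_pow a 2)
  convert h.isNilpotent_sq_mul_iff using 2 <;> noncomm_ring

theorem isNilpotent_sq_sub_sq_sq_iff :
    IsNilpotent (a ^ 2 - (a ^ 2) ^ 2) ↔ IsNilpotent (a - a ^ 3) := by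
  have h : Commute a (1 - a ^ 2) := (Commute.one_right a).sub_right (Commute.self_pow a 2)
  convert h.isNilpotent_sq_mul_iff using 2 <;> noncomm_ring

end

theorem stmt0 (R : Type*) [Ring R] :
    YaqubNilClean R ↔
      ∀ a : R, IsNilpotent (a ^ 2 - (a ^ 2) ^ 2) ∨ IsNilpotent (a ^ 2 + (a ^ 2) ^ 2) := by
  simp only [YaqubNilClean, isNilpotent_sq_sub_sq_sq_iff, isNilpotent_sq_add_sq_sq_iff, or_comm]
end

section
/- If R is a Yaqub nil-clean ring, then the Jacobson radical J(R) is a nil ideal. -/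
/-! For `x ∈ J(R)` both `1 + x ^ 2` and `1 - x ^ 2` are units commuting with `x`, so
nilpotency of `x ± x ^ 3 = x (1 ± x ^ 2)` forces nilpotency of `x`. -/

namespace Ideal

variable {R : Type*} [Ring R]

theorem isUnit_one_add_of_mem_jacobson_bot {y : R} (hy : y ∈ jacobson (⊥ : Ideal R)) :
    IsUnit (1 + y) := by
  obtain ⟨s, hs⟩ := exists_mul_add_sub_mem_of_mem_jacobson y hy
  have hs : s * (1 + y) = 1 := by
    rwa [mem_bot, sub_eq_zero, add_comm] at hs
  -- `s` has the right inverse `1 + y`; `s - 1 = -(s * y) ∈ J(R)` also gives it a left inverse.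
  have hs_sub : s - 1 ∈ jacobson (⊥ : Ideal R) := by
    rw [show s - 1 = -(s * y) by rw [← hs]; noncomm_ring]
    exact neg_mem (mul_mem_left _ s hy)
  obtain ⟨t, ht⟩ := exists_mul_sub_mem_of_sub_one_mem_jacobson s hs_sub
  rw [mem_bot, sub_eq_zero] at ht
  have ht_eq : t = 1 + y := left_inv_eq_right_inv ht hs
  exact ⟨⟨1 + y, s, ht_eq ▸ ht, hs⟩, rfl⟩

theorem isNilpotent_of_isNilpotent_mul_one_add {x y : R} (hy : y ∈ jacobson (⊥ : Ideal R))
    (hxy : Commute x y) (h : IsNilpotent (x * (1 + y))) : IsNilpotent x :=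
  ((isUnit_one_add_of_mem_jacobson_bot hy).isNilpotent_mul_unit_of_commute_iff
    ((Commute.one_right x).add_right hxy)).mp h

end Ideal

theorem stmt1 (R : Type*) [Ring R] (h : YaqubNilClean R) :
    ∀ x ∈ Ideal.jacobson (⊥ : Ideal R), IsNilpotent x := by
  intro x hx
  have hx2 : x ^ 2 ∈ Ideal.jacobson (⊥ : Ideal R) := Ideal.pow_mem_of_mem _ hx 2 two_pos
  have hcomm : Commute x (x ^ 2) := Commute.self_pow x 2
  rcases h x with hplus | hminus
  · rw [show x + x ^ 3 = x * (1 + x ^ 2) by noncomm_ring] at hplus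
    exact Ideal.isNilpotent_of_isNilpotent_mul_one_add hx2 hcomm hplus
  · rw [show x - x ^ 3 = x * (1 + -x ^ 2) by noncomm_ring] at hminus
    exact Ideal.isNilpotent_of_isNilpotent_mul_one_add (neg_mem hx2) hcomm.neg_right hminus
end

section
/- If R is a Yaqub nil-clean ring, then for every a in R the element a - a^5 is nilpotent. -/
section

variable {R : Type*} [Ring R] {a : R}

theorem isNilpotent_sub_pow_five_of_isNilpotent_add_pow_three (h : IsNilpotent (a + a ^ 3)) :
    IsNilpotent (a - a ^ 5) := by
  have hfactor : a - a ^ 5 = (a + a ^ 3) * (1 - a ^ 2) := by noncomm_ring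
  have hcomm : Commute (a + a ^ 3) (1 - a ^ 2) :=
    ((Commute.one_right a).sub_right (Commute.self_pow a 2)).add_left
      ((Commute.one_right _).sub_right (Commute.pow_pow_self a 3 2))
  rw [hfactor]
  exact hcomm.isNilpotent_mul_right h

theorem isNilpotent_sub_pow_five_of_isNilpotent_sub_pow_three (h : IsNilpotent (a - a ^ 3)) :
    IsNilpotent (a - a ^ 5) := by
  have hfactor : a - a ^ 5 = (a - a ^ 3) * (1 + a ^ 2) := by noncomm_ring
  have hcomm : Commute (a - a ^ 3) (1 + a ^ 2) :=
    ((Commute.one_right a).add_right (Commute.self_pow a 2)).sub_left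
      ((Commute.one_right _).add_right (Commute.pow_pow_self a 3 2))
  rw [hfactor]
  exact hcomm.isNilpotent_mul_right h

end

theorem stmt2 (R : Type*) [Ring R] (h : YaqubNilClean R) :
    ∀ a : R, IsNilpotent (a - a ^ 5) := fun a =>
  (h a).elim isNilpotent_sub_pow_five_of_isNilpotent_add_pow_three
    isNilpotent_sub_pow_five_of_isNilpotent_sub_pow_three
end

section
/- A ring R is Yaqub nil-clean if and only if J(R) is nil and the quotient R/J(R) satisfies the identity x^3 = x or x^3 = -x for every element x (i.e., for each x in R, x^3 - x ∈ J(R) or x^3 + x ∈ J(R)). -/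
section General

variable {R : Type*} [Ring R]

theorem isNilpotent_mul_comm {M₀ : Type*} [MonoidWithZero M₀] {x y : M₀} :
    IsNilpotent (x * y) ↔ IsNilpotent (y * x) := by
  have key : ∀ a b : M₀, IsNilpotent (a * b) → IsNilpotent (b * a) := by
    rintro a b ⟨k, hk⟩
    exact ⟨k + 1, by rw [pow_succ', mul_assoc, ← mul_pow_mul, hk, zero_mul, mul_zero]⟩
  exact ⟨key x y, key y x⟩

theorem mem_jacobson_iff_exists_mul_one_add_mul_eq_one {x : R} :
    x ∈ Ring.jacobson R ↔ ∀ y, ∃ w, w * (1 + y * x) = 1 := by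
  rw [← Ideal.jacobson_bot, Ideal.mem_jacobson_iff]
  refine forall_congr' fun y => exists_congr fun w => ?_
  rw [Ideal.mem_bot, mul_add, mul_one, ← mul_assoc, add_comm, sub_eq_zero]

theorem mem_jacobson_of_forall_isNilpotent_mul {z : R} (h : ∀ r, IsNilpotent (z * r)) :
    z ∈ Ring.jacobson R :=
  mem_jacobson_iff_exists_mul_one_add_mul_eq_one.mpr fun y =>
    (isNilpotent_mul_comm.mp (h y)).isUnit_one_add.exists_left_inv

theorem isNilpotent_of_isNilpotent_one_add_mul_mul {x y : R} (hx : x ∈ Ring.jacobson R)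
    (hxy : Commute x y) (h : IsNilpotent ((1 + y * x) * x)) : IsNilpotent x := by
  obtain ⟨w, hw⟩ := mem_jacobson_iff_exists_mul_one_add_mul_eq_one.mp hx y
  refine (Commute.isNilpotent_mul_left_iff ?_ ?_).mp h
  · exact (Commute.one_left x).add_left (hxy.symm.mul_left (Commute.refl x))
  · exact (isLeftRegular_of_mul_eq_one hw).mem_nonZeroDivisorsLeft

theorem isIdempotentElem_mul_pow {M : Type*} [Monoid M] {a b : M} (hab : Commute a b) {n : ℕ}
    (h : a ^ n = a ^ n * (a * b)) :
    IsIdempotentElem ((a * b) ^ n) ∧ a ^ n * (a * b) ^ n = a ^ n := by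
  have absorb : ∀ k, a ^ n * (a * b) ^ k = a ^ n := by
    intro k
    induction k with
    | zero => rw [pow_zero, mul_one]
    | succ k ih => rw [pow_succ, ← mul_assoc, ih, ← h]
  have hpow : (a * b) ^ n = b ^ n * a ^ n := by rw [hab.mul_pow, (hab.pow_pow n n).eq]
  refine ⟨?_, absorb n⟩
  rw [IsIdempotentElem]
  nth_rw 1 [hpow]
  rw [mul_assoc, absorb, hpow]

theorem exists_pow_eq_pow_mul_of_isNilpotent {t s : R} (hts : Commute t s)
    (h : IsNilpotent (t * (1 + s))) : ∃ (n : ℕ) (c : R), Commute t c ∧ t ^ n = t ^ n * (s * c) := by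
  obtain ⟨n, hn⟩ := h
  set G := ∑ i ∈ Finset.range n, (1 + s) ^ i
  have hG : (1 + s) ^ n = 1 + s * G := by
    have hsG : Commute s G := Commute.sum_right _ _ _ fun i _ =>
      ((Commute.one_right s).add_right (Commute.refl s)).pow_right i
    rw [hsG.eq, ← sub_eq_iff_eq_add', ← geom_sum_mul, add_sub_cancel_left]
  have htG : Commute t G :=
    Commute.sum_right _ _ _ fun i _ => ((Commute.one_right t).add_right hts).pow_right i
  refine ⟨n, -G, htG.neg_right, ?_⟩
  have hzero : t ^ n * (1 + s) ^ n = 0 := by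
    rw [← ((Commute.one_right t).add_right hts).mul_pow, hn]
  rw [hG, mul_add, mul_one, add_eq_zero_iff_eq_neg] at hzero
  rw [mul_neg, mul_neg, ← hzero]

end General

namespace NonUnitalRingHom

protected theorem map_pow_succ {R S : Type*} [Semiring R] [Semiring S]
    (φ : R →ₙ+* S) (x : R) (n : ℕ) : φ (x ^ (n + 1)) = φ x ^ (n + 1) := by
  induction n with
  | zero => simp
  | succ n ih => rw [pow_succ, map_mul, ih, ← pow_succ]

end NonUnitalRingHom

section MatrixUnits

variable {R : Type*} [Ring R] {ι : Type*} [Fintype ι] [DecidableEq ι]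

def matrixUnitsHom (E : ι → ι → R)
    (hE : ∀ i j k l, E i j * E k l = if j = k then E i l else 0) : Matrix ι ι ℤ →ₙ+* R where
  toFun A := ∑ i, ∑ j, A i j • E i j
  map_zero' := by simp
  map_add' A B := by simp only [Matrix.add_apply, add_smul, Finset.sum_add_distrib]
  map_mul' A B := by
    simp only [Finset.sum_mul, Finset.mul_sum, smul_mul_smul_comm, hE, smul_ite, smul_zero,
      Finset.sum_ite_eq', Finset.mem_univ, if_true, Matrix.mul_apply, Finset.sum_smul]
    rw [Finset.sum_congr rfl fun i _ => Finset.sum_comm, Finset.sum_comm]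
    exact Finset.sum_congr rfl fun j _ => Finset.sum_comm

theorem matrixUnitsHom_single (E : ι → ι → R)
    (hE : ∀ i j k l, E i j * E k l = if j = k then E i l else 0) (i j : ι) :
    matrixUnitsHom E hE (Matrix.single i j 1) = E i j := by
  show ∑ k, ∑ l, Matrix.single i j 1 k l • E k l = E i j
  simp [Matrix.single_apply, ite_smul, ite_and]

theorem exists_det_pow_smul_map_one_eq_zero (φ : Matrix ι ι ℤ →ₙ+* R) {N : Matrix ι ι ℤ}
    (h : IsNilpotent (φ N)) : ∃ k : ℕ, N.det ^ k • φ 1 = 0 := by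
  obtain ⟨k, hk⟩ := h
  refine ⟨k + 1, ?_⟩
  have hadj : Commute N.adjugate N := (N.adjugate_mul).trans N.mul_adjugate.symm
  calc N.det ^ (k + 1) • φ 1 = φ ((N.adjugate * N) ^ (k + 1)) := by
        rw [N.adjugate_mul, smul_pow, one_pow, map_zsmul]
    _ = φ (N.adjugate ^ (k + 1)) * φ N ^ (k + 1) := by
        rw [hadj.mul_pow, map_mul, NonUnitalRingHom.map_pow_succ φ N]
    _ = 0 := by rw [pow_succ (φ N), hk, zero_mul, mul_zero]

/-- Matrix units spanned by a square-zero `u` with reflexive inner inverse `v`; the idempotent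
`v u` is corrected to `g = v u - u v v u` so that it is orthogonal to `u v`. -/
def squareZeroMatrixUnits (u v : R) : Fin 2 → Fin 2 → R :=
  let g := v * u - u * v * (v * u)
  ![![u * v, u], ![g * v, g]]

theorem squareZeroMatrixUnits_mul {u v : R} (hu : u * u = 0) (huv : u * v * u = u)
    (hvu : v * u * v = v) (i j k l : Fin 2) :
    squareZeroMatrixUnits u v i j * squareZeroMatrixUnits u v k l =
      if j = k then squareZeroMatrixUnits u v i l else 0 := by
  have hu' : ∀ x, u * (u * x) = 0 := fun x => by rw [← mul_assoc, hu, zero_mul]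
  have hvu' : ∀ x, v * (u * (v * x)) = v * x := fun x => by rw [← mul_assoc, ← mul_assoc, hvu]
  rw [mul_assoc] at huv hvu
  fin_cases i <;> fin_cases j <;> fin_cases k <;> fin_cases l <;>
    simp [squareZeroMatrixUnits, mul_sub, sub_mul, mul_assoc, hu, hu', huv, hvu, hvu']

end MatrixUnits

namespace YaqubNilClean

variable {R : Type*} [Ring R]

theorem of_surjective {S : Type*} [Ring S] (hY : YaqubNilClean R) (f : R →+* S)
    (hf : Function.Surjective f) : YaqubNilClean S := by
  intro a
  obtain ⟨x, rfl⟩ := hf a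
  refine (hY x).imp (fun h => ?_) (fun h => ?_) <;> simpa using h.map f

theorem exists_isIdempotentElem (hY : YaqubNilClean R) (t : R) :
    ∃ (n : ℕ) (w : R), IsIdempotentElem (t * w) ∧ t ^ n * (t * w) = t ^ n := by
  obtain ⟨n, b, htb, hn⟩ : ∃ (n : ℕ) (b : R), Commute t b ∧ t ^ n = t ^ n * (t * b) := by
    have htt := (Commute.refl t).mul_right (Commute.refl t)
    rcases hY t with h | h
    · obtain ⟨n, c, htc, hn⟩ :=
        exists_pow_eq_pow_mul_of_isNilpotent htt (by convert h using 1; noncomm_ring)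
      exact ⟨n, t * c, (Commute.refl t).mul_right htc, hn.trans (by noncomm_ring)⟩
    · obtain ⟨n, c, htc, hn⟩ :=
        exists_pow_eq_pow_mul_of_isNilpotent htt.neg_right (by convert h using 1; noncomm_ring)
      exact ⟨n, -(t * c), ((Commute.refl t).mul_right htc).neg_right, hn.trans (by noncomm_ring)⟩
  have hn1 : t ^ (n + 1) = t ^ (n + 1) * (t * b) := by rw [pow_succ', mul_assoc, ← hn]
  obtain ⟨he, hte⟩ := isIdempotentElem_mul_pow htb hn1
  have he_eq : t * (b * (t * b) ^ n) = (t * b) ^ (n + 1) := by rw [← mul_assoc, ← pow_succ']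
  exact ⟨n + 1, b * (t * b) ^ n, he_eq ▸ he, he_eq ▸ hte⟩

theorem exists_det_pow_smul_eq_zero {ι : Type*} [Fintype ι] [DecidableEq ι] (hY : YaqubNilClean R)
    (φ : Matrix ι ι ℤ →ₙ+* R) (N : Matrix ι ι ℤ) :
    ∃ k : ℕ, (N + N ^ 3).det ^ k • φ 1 = 0 ∨ (N - N ^ 3).det ^ k • φ 1 = 0 := by
  rcases hY (φ N) with h | h
  · obtain ⟨k, hk⟩ := exists_det_pow_smul_map_one_eq_zero φ (N := N + N ^ 3)
      (by rwa [map_add, NonUnitalRingHom.map_pow_succ])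
    exact ⟨k, .inl hk⟩
  · obtain ⟨k, hk⟩ := exists_det_pow_smul_map_one_eq_zero φ (N := N - N ^ 3)
      (by rwa [map_sub, NonUnitalRingHom.map_pow_succ])
    exact ⟨k, .inr hk⟩

theorem map_one_eq_zero (hY : YaqubNilClean R) (φ : Matrix (Fin 2) (Fin 2) ℤ →ₙ+* R) :
    φ 1 = 0 := by
  obtain ⟨a, ha⟩ := hY.exists_det_pow_smul_eq_zero φ !![1, -1; 1, 0]
  obtain ⟨b, hb⟩ := hY.exists_det_pow_smul_eq_zero φ !![1, 1; 1, 0]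
  rw [show (!![1, -1; 1, 0] + !![1, -1; 1, 0] ^ 3 : Matrix (Fin 2) (Fin 2) ℤ).det = 1 by
      simp [Matrix.det_fin_two, pow_succ],
    show (!![1, -1; 1, 0] - !![1, -1; 1, 0] ^ 3 : Matrix (Fin 2) (Fin 2) ℤ).det = 3 by
      simp [Matrix.det_fin_two, pow_succ], one_pow, one_smul] at ha
  rw [show (!![1, 1; 1, 0] + !![1, 1; 1, 0] ^ 3 : Matrix (Fin 2) (Fin 2) ℤ).det = -5 by
      simp [Matrix.det_fin_two, pow_succ],
    show (!![1, 1; 1, 0] - !![1, 1; 1, 0] ^ 3 : Matrix (Fin 2) (Fin 2) ℤ).det = 1 by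
      simp [Matrix.det_fin_two, pow_succ], one_pow, one_smul] at hb
  rcases ha with h | h3
  · exact h
  rcases hb with h5 | h
  · obtain ⟨x, y, hxy⟩ := (Int.isCoprime_iff_gcd_eq_one.mpr rfl : IsCoprime (3 : ℤ) (-5)).pow
      (m := a) (n := b)
    calc φ 1 = (x * 3 ^ a + y * (-5) ^ b) • φ 1 := by rw [hxy, one_smul]
      _ = 0 := by rw [add_smul, mul_smul, mul_smul, h3, h5, smul_zero, smul_zero, add_zero]
  · exact h

theorem eq_zero_of_mul_self_eq_zero (hY : YaqubNilClean R) {u v : R} (hu : u * u = 0)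
    (huv : u * v * u = u) : u = 0 := by
  have huv' : u * (v * u * v) * u = u := by
    rw [show u * (v * u * v) * u = u * v * u * v * u by noncomm_ring, huv, huv]
  have hvu' : v * u * v * u * (v * u * v) = v * u * v := by
    rw [show v * u * v * u * (v * u * v) = v * (u * v * u) * (v * u * v) by noncomm_ring, huv,
      show v * u * (v * u * v) = v * (u * v * u) * v by noncomm_ring, huv]
  have hE := squareZeroMatrixUnits_mul hu huv' hvu'
  calc u = matrixUnitsHom _ hE (Matrix.single 0 1 1 * 1) := by
        rw [mul_one, matrixUnitsHom_single]; rfl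
    _ = 0 := by rw [map_mul, hY.map_one_eq_zero, mul_zero]

theorem isNilpotent_mul_of_mul_self_eq_zero (hY : YaqubNilClean R) {z : R} (hz : z * z = 0)
    (r : R) : IsNilpotent (z * r) := by
  obtain ⟨n, w, he, hn⟩ := hY.exists_isIdempotentElem (z * r)
  set e := z * r * w with he_def
  have hze : z * e = 0 := by rw [he_def, ← mul_assoc, ← mul_assoc, hz, zero_mul, zero_mul]
  have hez : e * z = 0 := by
    refine hY.eq_zero_of_mul_self_eq_zero (v := r * w) ?_ ?_
    · rw [mul_assoc, ← mul_assoc z, hze, zero_mul, mul_zero]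
    · rw [show e * z * (r * w) * (e * z) = e * (z * r * w) * e * z by noncomm_ring, ← he_def,
        he.eq, he.eq]
  have he0 : e = 0 :=
    calc e = e * e := he.eq.symm
      _ = e * z * (r * w) := by rw [he_def]; noncomm_ring
      _ = 0 := by rw [hez, zero_mul]
  exact ⟨n, by rw [← hn, he0, mul_zero]⟩

theorem isReduced_quotient_jacobson (hY : YaqubNilClean R) : IsReduced (R ⧸ Ring.jacobson R) := by
  have hS := hY.of_surjective (Ideal.Quotient.mk (Ring.jacobson R)) Ideal.Quotient.mk_surjective
  refine (isReduced_iff_pow_one_lt 2 one_lt_two).mpr fun x hx => ?_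
  have := mem_jacobson_of_forall_isNilpotent_mul
    (hS.isNilpotent_mul_of_mul_self_eq_zero (by rwa [← sq]))
  rwa [Ring.jacobson_quotient_jacobson, Ideal.mem_bot] at this

theorem isNilpotent_of_mem_jacobson (hY : YaqubNilClean R) {x : R} (hx : x ∈ Ring.jacobson R) :
    IsNilpotent x := by
  rcases hY x with h | h
  · exact isNilpotent_of_isNilpotent_one_add_mul_mul hx (Commute.refl x)
      (by convert h using 1; noncomm_ring)
  · exact isNilpotent_of_isNilpotent_one_add_mul_mul hx (Commute.refl x).neg_right
      (by convert h using 1; noncomm_ring)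

theorem mem_jacobson_of_isNilpotent (hY : YaqubNilClean R) {z : R} (hz : IsNilpotent z) :
    z ∈ Ring.jacobson R := by
  have := hY.isReduced_quotient_jacobson
  rw [← Ideal.Quotient.eq_zero_iff_mem]
  exact (hz.map (Ideal.Quotient.mk _)).eq_zero

end YaqubNilClean

theorem stmt3 (R : Type*) [Ring R] :
    YaqubNilClean R ↔
      (∀ x ∈ Ideal.jacobson (⊥ : Ideal R), IsNilpotent x) ∧
        ∀ x : R, x ^ 3 - x ∈ Ideal.jacobson (⊥ : Ideal R) ∨
          x ^ 3 + x ∈ Ideal.jacobson (⊥ : Ideal R) := by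
  rw [Ideal.jacobson_bot]
  constructor
  · intro hY
    refine ⟨fun x hx => hY.isNilpotent_of_mem_jacobson hx, fun x => ?_⟩
    rcases hY x with h | h
    · exact .inr (hY.mem_jacobson_of_isNilpotent (by rwa [add_comm]))
    · exact .inl (hY.mem_jacobson_of_isNilpotent (by simpa using h.neg))
  · rintro ⟨hnil, hJ⟩ a
    rcases hJ a with h | h
    · exact .inr (by simpa using (hnil _ h).neg)
    · exact .inl (by rw [add_comm]; exact hnil _ h)
end

section
/- If R and S are rings such that the product ring R × S is Yaqub nil-clean, then both R and S are Yaqub nil-clean, and at least one of R, S is strongly 2-nil-clean. -/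
/-! If `2` is nilpotent then `a + a³` and `a - a³` differ by the nilpotent `2a³`, so the two
alternatives of Yaqub nil-cleanness coincide. In `R × S`, the element `(a, 1)` has
`(a, 1) + (a, 1)³ = (a + a³, 2)` and `(a, 1) - (a, 1)³ = (a - a³, 0)`; hence if `R` is not
strongly 2-nil-clean, some such element forces `2` to be nilpotent in `S`, which makes `S`
strongly 2-nil-clean. -/

theorem YaqubNilClean.of_surjective_s6 {R S : Type*} [Ring R] [Ring S] (f : R →+* S)
    (hf : Function.Surjective f) (h : YaqubNilClean R) : YaqubNilClean S := by
  intro b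
  obtain ⟨a, rfl⟩ := hf b
  simpa only [map_add, map_sub, map_pow] using (h a).imp (·.map f) (·.map f)

theorem isNilpotent_sub_pow_three_of_isNilpotent_two {R : Type*} [Ring R]
    (h2 : IsNilpotent (2 : R)) {a : R} (ha : IsNilpotent (a + a ^ 3)) :
    IsNilpotent (a - a ^ 3) := by
  have h2a : IsNilpotent (2 * a ^ 3) := (Commute.ofNat_left 2 (a ^ 3)).isNilpotent_mul_right h2
  have hcomm : Commute (a + a ^ 3) (2 * a ^ 3) :=
    ((Commute.ofNat_right a 2).mul_right (Commute.self_pow a 3)).add_left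
      ((Commute.ofNat_right _ 2).mul_right (Commute.refl _))
  have := hcomm.isNilpotent_sub ha h2a
  rwa [two_mul, add_sub_add_right_eq_sub] at this

theorem isNilpotent_two_of_yaqubNilClean_prod {R S : Type*} [Ring R] [Ring S]
    (h : YaqubNilClean (R × S)) {a : R} (ha : ¬IsNilpotent (a - a ^ 3)) :
    IsNilpotent (2 : S) := by
  rcases h (a, 1) with hplus | hminus
  · simpa [one_add_one_eq_two] using hplus.map (RingHom.snd R S)
  · exact absurd (by simpa using hminus.map (RingHom.fst R S)) ha

theorem stmt6 (R S : Type*) [Ring R] [Ring S] (h : YaqubNilClean (R × S)) :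
    YaqubNilClean R ∧ YaqubNilClean S ∧
      ((∀ a : R, IsNilpotent (a - a ^ 3)) ∨ (∀ b : S, IsNilpotent (b - b ^ 3))) := by
  have hR : YaqubNilClean R := h.of_surjective_s6 (RingHom.fst R S) Prod.fst_surjective
  have hS : YaqubNilClean S := h.of_surjective_s6 (RingHom.snd R S) Prod.snd_surjective
  refine ⟨hR, hS, or_iff_not_imp_left.mpr fun hnot b => ?_⟩
  obtain ⟨a, ha⟩ := not_forall.mp hnot
  have h2 := isNilpotent_two_of_yaqubNilClean_prod h ha
  exact (hS b).elim (isNilpotent_sub_pow_three_of_isNilpotent_two h2) id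
end

section
/- If R is a Yaqub nil-clean ring, then 30 is nilpotent in R; more precisely, either 6 or 10 is nilpotent in R. -/
theorem IsNilpotent.natCast_of_dvd {R : Type*} [Semiring R] {m n : ℕ} (hmn : m ∣ n)
    (hm : IsNilpotent (m : R)) : IsNilpotent (n : R) := by
  obtain ⟨k, rfl⟩ := hmn
  rw [Nat.cast_mul]
  exact (Nat.cast_commute m (k : R)).isNilpotent_mul_right hm

/-- Test the defining condition on `a = 2`: `2 + 2 ^ 3 = 10` and `2 - 2 ^ 3 = -6`. -/
theorem YaqubNilClean.isNilpotent_six_or_ten {R : Type*} [Ring R] (h : YaqubNilClean R) :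
    IsNilpotent (6 : R) ∨ IsNilpotent (10 : R) := by
  rcases h 2 with h10 | h6
  · right
    convert h10 using 1
    norm_num
  · left
    rw [← isNilpotent_neg_iff]
    convert h6 using 1
    norm_num

theorem stmt9 (R : Type*) [Ring R] (h : YaqubNilClean R) :
    IsNilpotent (30 : R) ∧ (IsNilpotent (6 : R) ∨ IsNilpotent (10 : R)) := by
  refine ⟨?_, h.isNilpotent_six_or_ten⟩
  rcases h.isNilpotent_six_or_ten with h6 | h10
  · exact_mod_cast IsNilpotent.natCast_of_dvd (by norm_num : 6 ∣ 30) (by exact_mod_cast h6)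
  · exact_mod_cast IsNilpotent.natCast_of_dvd (by norm_num : 10 ∣ 30) (by exact_mod_cast h10)
end

section
/- A ring R is strongly 2-nil-clean if and only if 6 is nilpotent in R and R is Yaqub nil-clean. -/
/-!
Conversely to `2 - 2³ = -6`: the polynomials `p ∈ ℤ[X]` with `p(a)` nilpotent form an ideal, since
the image of the commutative ring `ℤ[X]` in `R` is commutative. It therefore suffices to derive
`a - a³ = 0` in a commutative ring from `6 = 0`, `a + a³ = 0` and `(1 + a) ± (1 + a)³ = 0`, which is
a linear combination of these relations.
-/

open Polynomial

def RingHom.nilpotentComap {A R : Type*} [CommRing A] [Ring R] (f : A →+* R) : Ideal A where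
  carrier := {x | IsNilpotent (f x)}
  zero_mem' := by simp
  add_mem' {x y} hx hy := by
    simp only [Set.mem_ofPred_eq, map_add] at *
    exact ((Commute.all x y).map f).isNilpotent_add hx hy
  smul_mem' c x hx := by
    simp only [smul_eq_mul, Set.mem_ofPred_eq, map_mul] at *
    exact ((Commute.all c x).map f).isNilpotent_mul_left hx

theorem RingHom.mk_nilpotentComap_eq_zero_iff {A R : Type*} [CommRing A] [Ring R]
    (f : A →+* R) (x : A) :
    Ideal.Quotient.mk f.nilpotentComap x = 0 ↔ IsNilpotent (f x) :=
  Ideal.Quotient.eq_zero_iff_mem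

theorem sub_pow_three_eq_zero_of_add_pow_three_eq_zero {S : Type*} [CommRing S] {y : S}
    (h6 : (6 : S) = 0) (hy : y + y ^ 3 = 0)
    (hy₁ : (1 + y) + (1 + y) ^ 3 = 0 ∨ (1 + y) - (1 + y) ^ 3 = 0) :
    y - y ^ 3 = 0 := by
  -- `3 (y - y³) = 3 (y + y³) - 6 y³` vanishes in both cases; the other half of `y - y³` comes from
  -- `4 = 0` in the first case and from `2 y = 2 (y + 3 y²) - 6 y² = 0` in the second.
  rcases hy₁ with hy₁ | hy₁
  · linear_combination (2 * (y - y ^ 3)) * (hy₁ - hy) - ((y - y ^ 3) * (y + y ^ 2) - y ^ 3) * h6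
      - 3 * hy
  · linear_combination 3 * hy + 2 * (1 - y ^ 2) * (hy₁ + hy) + ((1 - y ^ 2) * y ^ 2 - y ^ 3) * h6

theorem isNilpotent_six_of_forall_isNilpotent_sub_pow_three {R : Type*} [Ring R]
    (h : ∀ a : R, IsNilpotent (a - a ^ 3)) : IsNilpotent (6 : R) := by
  have h₂ := h 2
  norm_num at h₂
  exact h₂

theorem isNilpotent_sub_pow_three_of_yaqubNilClean {R : Type*} [Ring R] (h6 : IsNilpotent (6 : R))
    (hR : YaqubNilClean R) (a : R) : IsNilpotent (a - a ^ 3) := by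
  refine (hR a).elim (fun ha => ?_) id
  let f : ℤ[X] →+* R := (aeval a).toRingHom
  let π := Ideal.Quotient.mk f.nilpotentComap
  have hπ (p : ℤ[X]) : π p = 0 ↔ IsNilpotent (aeval a p) := f.mk_nilpotentComap_eq_zero_iff p
  have h6' : π 6 = 0 := (hπ 6).mpr (by rwa [map_ofNat])
  have ha' : π (X + X ^ 3) = 0 := (hπ _).mpr (by simpa using ha)
  have hR' : π ((1 + X) + (1 + X) ^ 3) = 0 ∨ π ((1 + X) - (1 + X) ^ 3) = 0 :=
    (hR (1 + a)).imp (fun h => (hπ _).mpr (by simpa using h)) (fun h => (hπ _).mpr (by simpa using h))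
  simp only [map_add, map_sub, map_pow, map_one, map_ofNat] at h6' ha' hR'
  have h : π (X - X ^ 3) = 0 := by
    simpa only [map_sub, map_pow] using sub_pow_three_eq_zero_of_add_pow_three_eq_zero h6' ha' hR'
  simpa using (hπ _).mp h

theorem stmt10 (R : Type*) [Ring R] :
    (∀ a : R, IsNilpotent (a - a ^ 3)) ↔ IsNilpotent (6 : R) ∧ YaqubNilClean R :=
  ⟨fun h => ⟨isNilpotent_six_of_forall_isNilpotent_sub_pow_three h, fun a => .inr (h a)⟩,
    fun ⟨h6, hR⟩ => isNilpotent_sub_pow_three_of_yaqubNilClean h6 hR⟩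
end

section
/- A ring R is strongly nil-clean if and only if 2 is nilpotent in R and R is Yaqub nil-clean. -/
section

variable {R : Type*} [Ring R] {a : R}

theorem IsNilpotent.ofNat_mul {n : ℕ} [n.AtLeastTwo] (hn : IsNilpotent (OfNat.ofNat n : R))
    (x : R) : IsNilpotent ((OfNat.ofNat n : R) * x) :=
  (Commute.ofNat_left n x).isNilpotent_mul_right hn

theorem IsNilpotent.sub_pow_three_of_sub_sq (h : IsNilpotent (a - a ^ 2)) :
    IsNilpotent (a - a ^ 3) := by
  have hcomm : Commute (a - a ^ 2) (1 + a) :=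
    (Commute.one_right _).add_right ((Commute.refl a).sub_left ((Commute.refl a).pow_left 2))
  rw [show a - a ^ 3 = (a - a ^ 2) * (1 + a) by noncomm_ring]
  exact hcomm.isNilpotent_mul_right h

theorem IsNilpotent.sub_pow_three_of_add_pow_three (h : IsNilpotent (a + a ^ 3))
    (h2 : IsNilpotent (2 : R)) : IsNilpotent (a - a ^ 3) := by
  have hcomm : Commute (a + a ^ 3) (2 * a ^ 3) :=
    (Commute.ofNat_right _ 2).mul_right
      (((Commute.refl a).pow_right 3).add_left ((Commute.refl a).pow_pow 3 3))
  rw [show a - a ^ 3 = (a + a ^ 3) - 2 * a ^ 3 by noncomm_ring]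
  exact hcomm.isNilpotent_sub h (h2.ofNat_mul _)

theorem IsNilpotent.sub_sq_of_sub_pow_three (h : IsNilpotent (a - a ^ 3))
    (h2 : IsNilpotent (2 : R)) : IsNilpotent (a - a ^ 2) := by
  have hsq : (a - a ^ 2) ^ 2 = a * (a - a ^ 3) + 2 * (a ^ 4 - a ^ 3) := by noncomm_ring
  have ha : Commute a (a - a ^ 3) := (Commute.refl a).sub_right ((Commute.refl a).pow_right 3)
  have hcomm : Commute (a * (a - a ^ 3)) (2 * (a ^ 4 - a ^ 3)) := by
    noncomm_ring [Commute, SemiconjBy]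
  refine IsNilpotent.of_pow (m := 2) ?_
  rw [hsq]
  exact hcomm.isNilpotent_add (ha.isNilpotent_mul_left h) (h2.ofNat_mul _)

end

theorem stmt11 (R : Type*) [Ring R] :
    (∀ a : R, IsNilpotent (a - a ^ 2)) ↔ IsNilpotent (2 : R) ∧ YaqubNilClean R := by
  constructor
  · intro h
    have h2 : IsNilpotent (-2 : R) := by
      simpa only [show (-1 : R) - (-1) ^ 2 = -2 by norm_num] using h (-1)
    exact ⟨isNilpotent_neg_iff.mp h2, fun a => Or.inr (h a).sub_pow_three_of_sub_sq⟩
  · rintro ⟨h2, hY⟩ a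
    rcases hY a with hadd | hsub
    · exact (hadd.sub_pow_three_of_add_pow_three h2).sub_sq_of_sub_pow_three h2
    · exact hsub.sub_sq_of_sub_pow_three h2
end

section
/- For n ≥ 2, the ring Z/nZ is Yaqub nil-clean if and only if n = 2^k · 3^l · 5^s for nonnegative integers k, l, s with l·s = 0. -/
/-!
An integer is nilpotent modulo `n ≠ 0` as soon as it is divisible by some `m` having every prime
factor of `n` among its own. Every integer `x` satisfies `10 ∣ x + x³` or `10 ∣ x - x³`, and
`6 ∣ x - x³`, so `ℤ/nℤ` is Yaqub nil-clean whenever the prime factors of `n` lie in `{2, 5}` or in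
`{2, 3}`. Conversely, testing `a = 2` shows that `10` or `6` is nilpotent modulo `n`, which forces
the prime factors of `n` into `{2, 5}` or `{2, 3}`.
-/

namespace Nat

theorem primeFactors_subset_pair_iff {n p q : ℕ} (hn : n ≠ 0) (hp : p.Prime) (hq : q.Prime)
    (hpq : p ≠ q) : n.primeFactors ⊆ {p, q} ↔ ∃ k l, n = p ^ k * q ^ l := by
  constructor
  · intro h
    refine ⟨n.factorization p, n.factorization q, ?_⟩
    conv_lhs => rw [← prod_factorization_pow_eq_self hn]
    rw [Finsupp.prod_of_support_subset _ (support_factorization n ▸ h) _ (by simp),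
      Finset.prod_pair hpq]
  · rintro ⟨k, l, rfl⟩ r hr
    have hr' := prime_of_mem_primeFactors hr
    rcases (hr'.dvd_mul.1 (dvd_of_mem_primeFactors hr)).imp (hr'.dvd_of_dvd_pow) (hr'.dvd_of_dvd_pow)
      with hrp | hrq
    · simp [(prime_dvd_prime_iff_eq hr' hp).1 hrp]
    · simp [(prime_dvd_prime_iff_eq hr' hq).1 hrq]

end Nat

namespace ZMod

theorem isNilpotent_natCast_iff {n k : ℕ} (hn : n ≠ 0) (hk : k ≠ 0) :
    IsNilpotent (k : ZMod n) ↔ n.primeFactors ⊆ k.primeFactors := by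
  simp_rw [IsNilpotent, ← Nat.cast_pow, natCast_eq_zero_iff]
  exact Nat.exists_dvd_pow_iff hn hk

theorem isNilpotent_intCast_of_dvd {n m : ℕ} (hn : n ≠ 0) (hm : m ≠ 0)
    (h : n.primeFactors ⊆ m.primeFactors) {x : ℤ} (hx : (m : ℤ) ∣ x) :
    IsNilpotent (x : ZMod n) := by
  obtain ⟨y, rfl⟩ := hx
  push_cast
  exact (Commute.all _ _).isNilpotent_mul_right ((isNilpotent_natCast_iff hn hm).2 h)

theorem yaqubNilClean_of_primeFactors_subset {n m : ℕ} (hn : n ≠ 0) (hm : m ≠ 0)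
    (h : n.primeFactors ⊆ m.primeFactors) (hcube : ∀ y : ZMod m, y + y ^ 3 = 0 ∨ y - y ^ 3 = 0) :
    YaqubNilClean (ZMod n) := by
  intro a
  obtain ⟨x, rfl⟩ : ∃ x : ℤ, (x : ZMod n) = a := ⟨a.cast, intCast_zmod_cast a⟩
  have key (y : ℤ) (hy : (y : ZMod m) = 0) : IsNilpotent (y : ZMod n) :=
    isNilpotent_intCast_of_dvd hn hm h ((intCast_zmod_eq_zero_iff_dvd y m).1 hy)
  refine (hcube x).imp (fun hx ↦ ?_) (fun hx ↦ ?_)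
  · rw [← Int.cast_pow, ← Int.cast_add]
    exact key _ (by push_cast; exact hx)
  · rw [← Int.cast_pow, ← Int.cast_sub]
    exact key _ (by push_cast; exact hx)

theorem yaqubNilClean_iff {n : ℕ} (hn : n ≠ 0) :
    YaqubNilClean (ZMod n) ↔ n.primeFactors ⊆ {2, 5} ∨ n.primeFactors ⊆ {2, 3} := by
  have h10 : Nat.primeFactors 10 = {2, 5} := by simp [Nat.primeFactors]
  have h6 : Nat.primeFactors 6 = {2, 3} := by simp [Nat.primeFactors]
  constructor
  · intro h
    rcases h 2 with h | h
    · left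
      rw [← h10, ← isNilpotent_natCast_iff hn (by norm_num)]
      norm_num at h ⊢
      exact h
    · right
      rw [← h6, ← isNilpotent_natCast_iff hn (by norm_num), ← isNilpotent_neg_iff]
      norm_num at h ⊢
      exact h
  · rintro (h | h)
    · exact yaqubNilClean_of_primeFactors_subset hn (m := 10) (by norm_num) (h10 ▸ h) (by decide)
    · exact yaqubNilClean_of_primeFactors_subset hn (m := 6) (by norm_num) (h6 ▸ h)
        (fun y ↦ .inr (by revert y; decide))

end ZMod

theorem stmt12 (n : ℕ) (hn : 2 ≤ n) :
    YaqubNilClean (ZMod n) ↔ ∃ k l s : ℕ, n = 2 ^ k * 3 ^ l * 5 ^ s ∧ l * s = 0 := by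
  have hn0 : n ≠ 0 := by omega
  rw [ZMod.yaqubNilClean_iff hn0,
    Nat.primeFactors_subset_pair_iff hn0 Nat.prime_two Nat.prime_five (by norm_num),
    Nat.primeFactors_subset_pair_iff hn0 Nat.prime_two Nat.prime_three (by norm_num)]
  constructor
  · rintro (⟨k, s, rfl⟩ | ⟨k, l, rfl⟩)
    · exact ⟨k, 0, s, by ring, zero_mul s⟩
    · exact ⟨k, l, 0, by ring, mul_zero l⟩
  · rintro ⟨k, l, s, rfl, hls⟩
    rcases Nat.mul_eq_zero.1 hls with rfl | rfl
    · exact .inl ⟨k, s, by ring⟩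
    · exact .inr ⟨k, l, by ring⟩
end

section
/- Let R be a ring in which 5 is nilpotent, and let a ∈ R with a + a^3 nilpotent. Then there exists an element e in the subring generated by a (the image of an integer polynomial evaluated at a) such that a - e is nilpotent and e^3 = 4e. -/
/-!
Work in the commutative subring `ℤ[a]`. There `P = X³ - 4X` satisfies
`P(a) = (a + a³) - 5a`, which is nilpotent, and `P'(a) = 3a² - 4` is a unit, because
`(3a² - 4)(4a² + 1) = 1 + 12a(a + a³) - 5(5a² + 1)`. Newton's method (Hensel's lemma for
nilpotent ideals) then yields a root `e ∈ ℤ[a]` of `P` with `a - e` nilpotent.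
-/

open Polynomial
open scoped IsMulCommutative

section CommRing

variable {S : Type*} [CommRing S] {x : S}

lemma isNilpotent_cube_sub_four_mul (h5 : IsNilpotent (5 : S)) (hx : IsNilpotent (x + x ^ 3)) :
    IsNilpotent (x ^ 3 - 4 * x) := by
  rw [← mem_nilradical] at *
  rw [show x ^ 3 - 4 * x = (x + x ^ 3) - 5 * x by ring]
  exact sub_mem hx (Ideal.mul_mem_right x _ h5)

lemma isUnit_three_mul_sq_sub_four (h5 : IsNilpotent (5 : S)) (hx : IsNilpotent (x + x ^ 3)) :
    IsUnit (3 * x ^ 2 - 4) := by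
  have hnil : IsNilpotent (12 * x * (x + x ^ 3) - 5 * (5 * x ^ 2 + 1)) := by
    rw [← mem_nilradical] at *
    exact sub_mem (Ideal.mul_mem_left _ _ hx) (Ideal.mul_mem_right _ _ h5)
  refine isUnit_of_mul_isUnit_left (y := 4 * x ^ 2 + 1) ?_
  convert hnil.isUnit_one_add using 1
  ring

lemma exists_isNilpotent_sub_and_cube_eq_four_mul (h5 : IsNilpotent (5 : S))
    (hx : IsNilpotent (x + x ^ 3)) : ∃ e, IsNilpotent (x - e) ∧ e ^ 3 = 4 * e := by
  obtain ⟨e, ⟨hxe, he⟩, -⟩ := existsUnique_nilpotent_sub_and_aeval_eq_zero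
    (P := (X ^ 3 - 4 * X : ℤ[X])) (x := x)
    (by simpa [map_ofNat] using isNilpotent_cube_sub_four_mul h5 hx)
    (by simpa [map_ofNat] using isUnit_three_mul_sq_sub_four h5 hx)
  exact ⟨e, hxe, by simpa [map_ofNat, sub_eq_zero] using he⟩

end CommRing

theorem stmt13 (R : Type*) [Ring R] (h5 : IsNilpotent (5 : R)) (a : R)
    (ha : IsNilpotent (a + a ^ 3)) :
    ∃ e : R, (∃ p : Polynomial ℤ, e = Polynomial.aeval a p) ∧
      IsNilpotent (a - e) ∧ e ^ 3 = 4 * e := by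
  let A := Algebra.adjoin ℤ ({a} : Set R)
  let x : A := ⟨a, Algebra.self_mem_adjoin_singleton ℤ a⟩
  have hval : Function.Injective A.val := Subtype.val_injective
  obtain ⟨e, hxe, he⟩ := exists_isNilpotent_sub_and_cube_eq_four_mul (x := x)
    ((IsNilpotent.map_iff hval).mp (by rwa [map_ofNat]))
    ((IsNilpotent.map_iff hval).mp ha)
  obtain ⟨p, hp⟩ : (e : R) ∈ (aeval (R := ℤ) a).range := by
    rw [← Algebra.adjoin_singleton_eq_range_aeval]
    exact e.2
  exact ⟨e, ⟨p, hp.symm⟩, by simpa using hxe.map A.val,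
    by simpa only [map_pow, map_mul, map_ofNat, Subalgebra.coe_val] using congrArg A.val he⟩
end

section
/- Let R be a ring in which 5 is nilpotent and a ∈ R. Then a + a^3 is nilpotent if and only if there exists e ∈ R with e^3 = e, a·e = e·a, and a + 3e nilpotent. -/
/-!
In a commutative ring with `5` nilpotent, `2` is a unit, so `3x² - 1`, the derivative of
`X³ - X`, is a unit wherever `x³ - x` is nilpotent; Newton's method then lifts `x = -2a` to a
genuine root `e` of `X³ - X`. Modulo the nilradical `5 = 0`, so `a ≡ -3e` there, and both
directions become polynomial identities. A noncommutative ring is reduced to this case by passing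
to the commutative subalgebra generated by `a` (and `e`).
-/

open Polynomial
open scoped IsMulCommutative

section CommRing

variable {S : Type*} [CommRing S]

lemma isUnit_two_of_isNilpotent_five (h5 : IsNilpotent (5 : S)) : IsUnit (2 : S) := by
  have h6 : IsUnit ((2 : S) * 3) := by
    rw [show (2 : S) * 3 = 1 + 5 by norm_num]
    exact h5.isUnit_one_add
  exact isUnit_of_mul_isUnit_left h6

lemma isUnit_three_mul_sq_sub_one (h5 : IsNilpotent (5 : S)) {x : S}
    (hx : IsNilpotent (x ^ 3 - x)) : IsUnit (3 * x ^ 2 - 1) := by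
  have : IsUnit ((3 * x ^ 2 - 1) * (3 * x ^ 2 - 2)) := by
    rw [show (3 * x ^ 2 - 1) * (3 * x ^ 2 - 2) = 2 + 9 * x * (x ^ 3 - x) by ring]
    exact ((Commute.all _ _).isNilpotent_mul_left hx).isUnit_add_left_of_commute
      (isUnit_two_of_isNilpotent_five h5) (Commute.all _ _)
  exact isUnit_of_mul_isUnit_left this

lemma exists_cube_eq_self_isNilpotent_sub (h5 : IsNilpotent (5 : S)) {x : S}
    (hx : IsNilpotent (x ^ 3 - x)) : ∃ e : S, e ^ 3 = e ∧ IsNilpotent (x - e) := by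
  obtain ⟨e, ⟨hxe, he⟩, -⟩ := existsUnique_nilpotent_sub_and_aeval_eq_zero
    (P := (X ^ 3 - X : ℤ[X])) (x := x) (by simpa using hx)
    (by simpa [map_ofNat] using isUnit_three_mul_sq_sub_one h5 hx)
  exact ⟨e, by simpa [sub_eq_zero] using he, hxe⟩

lemma isNilpotent_add_cube_iff (h5 : IsNilpotent (5 : S)) (a : S) :
    IsNilpotent (a + a ^ 3) ↔ ∃ e : S, e ^ 3 = e ∧ IsNilpotent (a + 3 * e) := by
  simp_rw [← mem_nilradical] at h5 ⊢
  constructor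
  · intro ha
    -- `-2 * a ≡ 6 * e ≡ e` modulo the nilradical, if `e` exists at all.
    obtain ⟨e, he, hxe⟩ := exists_cube_eq_self_isNilpotent_sub (mem_nilradical.1 h5)
      (x := -2 * a) (mem_nilradical.1 <| by
        rw [show (-2 * a) ^ 3 - -2 * a = -8 * (a + a ^ 3) + 5 * (2 * a) by ring]
        exact add_mem (Ideal.mul_mem_left _ _ ha) (Ideal.mul_mem_right _ _ h5))
    refine ⟨e, he, ?_⟩
    rw [show a + 3 * e = -3 * (-2 * a - e) + 5 * -a by ring]
    exact add_mem (Ideal.mul_mem_left _ _ (mem_nilradical.2 hxe)) (Ideal.mul_mem_right _ _ h5)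
  · rintro ⟨e, he, hb⟩
    rw [show a + a ^ 3 = (a + 3 * e) * (1 + (a + 3 * e) ^ 2 - 9 * (a + 3 * e) * e + 27 * e ^ 2)
      + 5 * (-6 * e) by linear_combination (-27 : S) * he]
    exact add_mem (Ideal.mul_mem_right _ _ hb) (Ideal.mul_mem_right _ _ h5)

end CommRing

lemma Subalgebra.isNilpotent_coe_iff {R A : Type*} [CommSemiring R] [Semiring A] [Algebra R A]
    {S : Subalgebra R A} {x : S} : IsNilpotent (x : A) ↔ IsNilpotent x :=
  IsNilpotent.map_iff (f := S.val) Subtype.val_injective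

theorem stmt14 (R : Type*) [Ring R] (h5 : IsNilpotent (5 : R)) (a : R) :
    IsNilpotent (a + a ^ 3) ↔
      ∃ e : R, e ^ 3 = e ∧ a * e = e * a ∧ IsNilpotent (a + 3 * e) := by
  constructor
  · intro ha
    let a' : Algebra.adjoin ℤ {a} := ⟨a, Algebra.self_mem_adjoin_singleton ℤ a⟩
    obtain ⟨e, he, hae⟩ := (isNilpotent_add_cube_iff (Subalgebra.isNilpotent_coe_iff.1 h5) a').1
      (Subalgebra.isNilpotent_coe_iff.1 ha)
    exact ⟨e, congrArg Subtype.val he, congrArg Subtype.val (mul_comm a' e),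
      Subalgebra.isNilpotent_coe_iff.2 hae⟩
  · rintro ⟨e, he, hae, hb⟩
    have : IsMulCommutative (Algebra.adjoin ℤ {a, e}) := Algebra.isMulCommutative_adjoin ℤ <| by
      rintro x (rfl | rfl) y (rfl | rfl) <;> first | rfl | exact hae | exact hae.symm
    let a' : Algebra.adjoin ℤ {a, e} := ⟨a, Algebra.subset_adjoin (by simp)⟩
    let e' : Algebra.adjoin ℤ {a, e} := ⟨e, Algebra.subset_adjoin (by simp)⟩
    exact Subalgebra.isNilpotent_coe_iff.2 <|
      (isNilpotent_add_cube_iff (Subalgebra.isNilpotent_coe_iff.1 h5) a').2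
        ⟨e', Subtype.ext he, Subalgebra.isNilpotent_coe_iff.1 hb⟩
end

section
/- Every subring of a Hirano ring is a Hirano ring. -/
def HiranoRing (R : Type*) [Ring R] : Prop :=
  ∀ u : Rˣ, IsNilpotent (1 + (u : R) ^ 2) ∨ IsNilpotent (1 - (u : R) ^ 2)

theorem HiranoRing.of_injective {S R : Type*} [Ring S] [Ring R] {f : S →+* R}
    (hf : Function.Injective f) (h : HiranoRing R) : HiranoRing S := by
  intro u
  simpa only [← IsNilpotent.map_iff hf, map_add, map_sub, map_one, map_pow, Units.coe_map,
    MonoidHom.coe_coe] using h (Units.map (f : S →* R) u)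

theorem stmt16 (R : Type*) [Ring R] (h : HiranoRing R) (S : Subring R) :
    HiranoRing S :=
  h.of_injective S.subtype_injective
end

section
/- The ring Z/5Z × Z/5Z is not a Hirano ring, although Z/5Z is a Hirano ring. -/
theorem not_hiranoRing_prod {R S : Type*} [Ring R] [Ring S] (u : Rˣ) (v : Sˣ)
    (hu : ¬IsNilpotent (1 + (u : R) ^ 2)) (hv : ¬IsNilpotent (1 - (v : S) ^ 2)) :
    ¬HiranoRing (R × S) := by
  intro h
  rcases h (MulEquiv.prodUnits.symm (u, v)) with hplus | hminus
  · exact hu (hplus.map (RingHom.fst R S))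
  · exact hv (hminus.map (RingHom.snd R S))

theorem hiranoRing_of_pow_four_eq_one {R : Type*} [CommRing R] [IsDomain R]
    (h : ∀ u : Rˣ, u ^ 4 = 1) : HiranoRing R := by
  intro u
  have hprod : (1 + (u : R) ^ 2) * (1 - (u : R) ^ 2) = 0 := by
    have hu : (u : R) ^ 4 = 1 := by rw [← Units.val_pow_eq_pow_val, h u, Units.val_one]
    linear_combination -hu
  rcases mul_eq_zero.mp hprod with hplus | hminus
  · exact Or.inl (hplus ▸ IsNilpotent.zero)
  · exact Or.inr (hminus ▸ IsNilpotent.zero)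

theorem stmt17 : ¬ HiranoRing (ZMod 5 × ZMod 5) ∧ HiranoRing (ZMod 5) := by
  have : Fact (Nat.Prime 5) := ⟨Nat.prime_five⟩
  constructor
  · refine not_hiranoRing_prod 1 (ZMod.unitOfCoprime 2 (by norm_num)) ?_ ?_ <;>
      exact (IsUnit.of_mul_eq_one 3 rfl).not_isNilpotent
  · exact hiranoRing_of_pow_four_eq_one (ZMod.units_pow_card_sub_one_eq_one 5)
end
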